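/- The Diophantine equation c_1 x^2 + c_2 y + c_3 = 0 has a solution in non-negative integers x, y if and only if there exists a word w over the binary alphabet {a, b} such that c_1·|w|_a + 2·c_1·|w|_{aa} + c_2·|w|_b + c_3 = 0. -/

import Mathlib

/-!
A scattered occurrence of `aᵏ` in `w` is a choice of `k` of the `a`s of `w`, so `|w|_{aa}` is
`C(|w|_a, 2)` and the word expression equals `c₁ |w|_a² + c₂ |w|_b + c₃`. Since `aˣbʸ` realises every
pair `(|w|_a, |w|_b) = (x, y)`, both sides of the equivalence say the same thing.
-/

def swc {α : Type*} [DecidableEq α] (w u : List α) : ℕ := w.sublists.count u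

theorem swc_eq_count_sublists' {α : Type*} [DecidableEq α] (w u : List α) :
    swc w u = w.sublists'.count u :=
  (List.sublists_perm_sublists' w).count_eq u

theorem count_map_cons_of_ne {α : Type*} [DecidableEq α] {a x : α} (h : x ≠ a) (u : List α)
    (S : List (List α)) : (S.map (x :: ·)).count (a :: u) = 0 :=
  List.count_eq_zero.2 (by simp [h])

theorem count_replicate_sublists' {α : Type*} [DecidableEq α] (w : List α) (a : α) (k : ℕ) :
    w.sublists'.count (List.replicate k a) = (w.count a).choose k := by
  induction w generalizing k with
  | nil => cases k <;> simp
  | cons x l ih =>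
    rw [List.sublists'_cons, List.count_append, ih]
    cases k with
    | zero => simp [List.count_eq_zero]
    | succ k =>
      rw [List.replicate_succ]
      by_cases hx : x = a
      · subst hx
        rw [List.count_map_of_injective _ _ List.cons_injective, ih, List.count_cons_self,
          Nat.choose_succ_succ', add_comm]
      · rw [count_map_cons_of_ne hx, List.count_cons_of_ne hx, add_zero]

theorem swc_replicate {α : Type*} [DecidableEq α] (w : List α) (a : α) (k : ℕ) :
    swc w (List.replicate k a) = (w.count a).choose k := by
  rw [swc_eq_count_sublists', count_replicate_sublists']

theorem two_mul_swc_pair {α : Type*} [DecidableEq α] (w : List α) (a : α) :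
    2 * (swc w [a, a] : ℤ) = w.count a * (w.count a - 1) := by
  rw [show [a, a] = List.replicate 2 a from rfl, swc_replicate]
  qify
  rw [Nat.cast_choose_two]
  ring

theorem stmt12 (c₁ c₂ c₃ : ℤ) :
    (∃ x y : ℕ, c₁ * (x : ℤ) ^ 2 + c₂ * (y : ℤ) + c₃ = 0) ↔
      (∃ w : List (Fin 2),
        c₁ * (w.count 0 : ℤ) + 2 * c₁ * (swc w [0, 0] : ℤ)
          + c₂ * (w.count 1 : ℤ) + c₃ = 0) := by
  have key (w : List (Fin 2)) :
      c₁ * (w.count 0 : ℤ) + 2 * c₁ * (swc w [0, 0] : ℤ) + c₂ * (w.count 1 : ℤ) + c₃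
        = c₁ * (w.count 0 : ℤ) ^ 2 + c₂ * (w.count 1 : ℤ) + c₃ := by
    linear_combination c₁ * two_mul_swc_pair w 0
  simp only [key]
  constructor
  · rintro ⟨x, y, hxy⟩
    refine ⟨List.replicate x 0 ++ List.replicate y 1, ?_⟩
    simpa [List.count_replicate] using hxy
  · rintro ⟨w, hw⟩
    exact ⟨w.count 0, w.count 1, hw⟩
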